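/- The function W : (ℂ∖{0})² → ℂ defined by W(y_1, y_2) = y_1 + y_2 + y_1^{−1}y_2^{−1} + 2·y_2^{−1} + y_1·y_2^{−1} has exactly 3 critical points, and each of these critical points is nondegenerate. -/

import Mathlib

/-- The potential function of the monotone fiber `L(2,2)` in `X̂₂` without bulk deformation (energy factor dropped). -/
noncomputable def W : ℂ → ℂ → ℂ := fun y₁ y₂ =>
  y₁ + y₂ + y₁⁻¹ * y₂⁻¹ + 2 * y₂⁻¹ + y₁ * y₂⁻¹

/-- A point of `(ℂ∖{0})²` is a critical point of `W` if both partial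
derivatives of `W` vanish there. -/
def IsCritPt (p : ℂ × ℂ) : Prop :=
  p.1 ≠ 0 ∧ p.2 ≠ 0 ∧
    deriv (fun z => W z p.2) p.1 = 0 ∧ deriv (fun z => W p.1 z) p.2 = 0

/-- The Hessian determinant
`(∂²W/∂y₁²)(∂²W/∂y₂²) - (∂²W/∂y₁∂y₂)²` of `W` at a point. -/
noncomputable def hessDet (p : ℂ × ℂ) : ℂ :=
  deriv (deriv (fun z => W z p.2)) p.1 * deriv (deriv (fun z => W p.1 z)) p.2
    - (deriv (fun w => deriv (fun z => W z w) p.1) p.2) ^ 2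


/-!
Clearing denominators, `∂₁W = 0` says `b = a⁻² - 1` and `∂₂W = 0` says `a b² = (1 + a)²`;
eliminating `b` leaves `a³ = (1 - a)²`, a separable cubic, so there are exactly three critical
points, one over each root `a`. The Hessian determinant is `(1 + a)³ (3 - a) / (a⁴ b⁴)`, and
neither `-1` nor `3` is a root of the cubic.
-/

open Polynomial Filter Topology

theorem ncard_setOf_eval_eq_zero_of_separable {K : Type*} [Field K] [IsAlgClosed K] {p : K[X]}
    (hp : p.Separable) : {x | p.eval x = 0}.ncard = p.natDegree := by
  classical
  have : {x | p.eval x = 0} = p.rootSet K := by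
    ext x
    simp [mem_rootSet, hp.ne_zero]
  rw [this, Set.ncard_eq_toFinset_card', Set.toFinset_card,
    card_rootSet_eq_natDegree hp (IsAlgClosed.splits _)]

noncomputable def critCubic : ℂ[X] := X ^ 3 - X ^ 2 + 2 * X - 1

@[simp]
theorem eval_critCubic (a : ℂ) : critCubic.eval a = a ^ 3 - a ^ 2 + 2 * a - 1 := by
  simp [critCubic]

theorem critCubic_natDegree : critCubic.natDegree = 3 := by
  unfold critCubic
  compute_degree!

-- A Bézout certificate `u p + v p' = 1`; the denominator 23 is minus the discriminant of `p`.
theorem critCubic_separable : critCubic.Separable := by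
  refine ⟨-(C (30 / 23) * X + C (1 / 23)), C (10 / 23) * X ^ 2 - C (3 / 23) * X + C (11 / 23),
    Polynomial.funext fun x => ?_⟩
  simp only [critCubic, derivative_sub, derivative_add, derivative_X_pow, derivative_mul,
    derivative_X, derivative_one, derivative_ofNat, eval_add, eval_sub, eval_mul, eval_neg,
    eval_C, eval_X, eval_pow, eval_one, eval_ofNat, eval_zero, Nat.cast_ofNat]
  ring

theorem hasDerivAt_W_fst {a : ℂ} (b : ℂ) (ha : a ≠ 0) :
    HasDerivAt (fun z => W z b) (1 - (a ^ 2)⁻¹ * b⁻¹ + b⁻¹) a := by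
  have h := (((hasDerivAt_id a).add_const b).add ((hasDerivAt_inv ha).mul_const b⁻¹)).add_const
    (2 * b⁻¹) |>.add ((hasDerivAt_id a).mul_const b⁻¹)
  exact h.congr_deriv (by ring)

theorem hasDerivAt_W_snd (a : ℂ) {b : ℂ} (hb : b ≠ 0) :
    HasDerivAt (fun z => W a z) (1 - (a⁻¹ + 2 + a) * (b ^ 2)⁻¹) b := by
  have h := (((hasDerivAt_id b).const_add a).add ((hasDerivAt_inv hb).const_mul a⁻¹)).add
    ((hasDerivAt_inv hb).const_mul 2) |>.add ((hasDerivAt_inv hb).const_mul a)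
  exact h.congr_deriv (by ring)

theorem deriv_deriv_W_fst {a : ℂ} (b : ℂ) (ha : a ≠ 0) :
    deriv (deriv fun z => W z b) a = 2 / (a ^ 3 * b) := by
  have hW : deriv (fun z => W z b) =ᶠ[𝓝 a] fun z => 1 - (z ^ 2)⁻¹ * b⁻¹ + b⁻¹ :=
    (eventually_ne_nhds ha).mono fun z hz => (hasDerivAt_W_fst b hz).deriv
  rw [hW.deriv_eq]
  refine ((((hasDerivAt_pow 2 a).inv (pow_ne_zero 2 ha)).mul_const b⁻¹).const_sub 1
    |>.add_const b⁻¹).deriv.trans ?_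
  field_simp
  ring

theorem deriv_deriv_W_snd (a : ℂ) {b : ℂ} (hb : b ≠ 0) :
    deriv (deriv fun z => W a z) b = 2 * (a⁻¹ + 2 + a) / b ^ 3 := by
  have hW : deriv (fun z => W a z) =ᶠ[𝓝 b] fun w => 1 - (a⁻¹ + 2 + a) * (w ^ 2)⁻¹ :=
    (eventually_ne_nhds hb).mono fun w hw => (hasDerivAt_W_snd a hw).deriv
  rw [hW.deriv_eq]
  refine ((((hasDerivAt_pow 2 b).inv (pow_ne_zero 2 hb)).const_mul (a⁻¹ + 2 + a)).const_sub 1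
    ).deriv.trans ?_
  field_simp
  ring

theorem deriv_deriv_W_fst_snd {a b : ℂ} (ha : a ≠ 0) (hb : b ≠ 0) :
    deriv (fun w => deriv (fun z => W z w) a) b = ((a ^ 2)⁻¹ - 1) / b ^ 2 := by
  have hW : (fun w => deriv (fun z => W z w) a) = fun w => 1 - (a ^ 2)⁻¹ * w⁻¹ + w⁻¹ :=
    funext fun w => (hasDerivAt_W_fst w ha).deriv
  rw [hW]
  refine ((((hasDerivAt_inv hb).const_mul (a ^ 2)⁻¹).const_sub 1).add (hasDerivAt_inv hb)
    ).deriv.trans ?_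
  field_simp
  ring

theorem hessDet_eq {a b : ℂ} (ha : a ≠ 0) (hb : b ≠ 0) :
    hessDet (a, b) = (1 + a) ^ 3 * (3 - a) / (a ^ 4 * b ^ 4) := by
  rw [hessDet, deriv_deriv_W_fst b ha, deriv_deriv_W_snd a hb, deriv_deriv_W_fst_snd ha hb]
  field_simp
  ring

theorem isCritPt_iff_eqns (a b : ℂ) :
    IsCritPt (a, b) ↔ a ≠ 0 ∧ b ≠ 0 ∧ a ^ 2 * b + a ^ 2 = 1 ∧ a * b ^ 2 = (1 + a) ^ 2 := by
  refine and_congr_right fun ha => and_congr_right fun hb => ?_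
  rw [(hasDerivAt_W_fst b ha).deriv, (hasDerivAt_W_snd a hb).deriv]
  refine and_congr ⟨fun h => ?_, fun h => ?_⟩ ⟨fun h => ?_, fun h => ?_⟩
  · field_simp at h
    exact mul_left_cancel₀ hb (by linear_combination b * h)
  · field_simp
    linear_combination h
  · field_simp at h
    linear_combination h
  · field_simp
    linear_combination h

theorem crit_eqns_iff_cubic {K : Type*} [Field K] [CharZero K] (a b : K) :
    (a ≠ 0 ∧ b ≠ 0 ∧ a ^ 2 * b + a ^ 2 = 1 ∧ a * b ^ 2 = (1 + a) ^ 2) ↔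
      a ^ 3 - a ^ 2 + 2 * a - 1 = 0 ∧ b = (a ^ 2)⁻¹ - 1 := by
  constructor
  · rintro ⟨ha, hb, h₁, h₂⟩
    have ha₁ : (1 + a) ^ 2 ≠ 0 := by
      refine pow_ne_zero 2 fun h => hb ?_
      obtain rfl : a = -1 := by linear_combination h
      linear_combination h₁
    have hcube : a ^ 3 * (1 + a) ^ 2 = (1 - a) ^ 2 * (1 + a) ^ 2 := by
      linear_combination (-a ^ 3) * h₂ + (a ^ 2 * b + 1 - a ^ 2) * h₁
    refine ⟨by linear_combination mul_right_cancel₀ ha₁ hcube, ?_⟩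
    field_simp
    linear_combination h₁
  · rintro ⟨hcube, rfl⟩
    have ha : a ≠ 0 := by
      rintro rfl
      norm_num at hcube
    have hb : (a ^ 2)⁻¹ - 1 ≠ 0 := by
      rw [sub_ne_zero, inv_ne_one, Ne, sq_eq_one_iff]
      rintro (rfl | rfl) <;> norm_num at hcube
    have h₁ : a ^ 2 * ((a ^ 2)⁻¹ - 1) + a ^ 2 = 1 := by
      field_simp
      ring
    refine ⟨ha, hb, h₁, ?_⟩
    field_simp
    linear_combination -(1 + a) ^ 2 * hcube

theorem isCritPt_iff (a b : ℂ) : IsCritPt (a, b) ↔ critCubic.eval a = 0 ∧ b = (a ^ 2)⁻¹ - 1 := by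
  rw [isCritPt_iff_eqns, crit_eqns_iff_cubic, eval_critCubic]

theorem setOf_isCritPt :
    {p : ℂ × ℂ | IsCritPt p} = (fun a => (a, (a ^ 2)⁻¹ - 1)) '' {a | critCubic.eval a = 0} := by
  ext ⟨a, b⟩
  simp [isCritPt_iff, eq_comm]

theorem ncard_setOf_isCritPt : {p : ℂ × ℂ | IsCritPt p}.ncard = 3 := by
  rw [setOf_isCritPt, Set.ncard_image_of_injective _ fun x y h => congrArg Prod.fst h,
    ncard_setOf_eval_eq_zero_of_separable critCubic_separable, critCubic_natDegree]

theorem hessDet_ne_zero_of_isCritPt {p : ℂ × ℂ} (hp : IsCritPt p) : hessDet p ≠ 0 := by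
  obtain ⟨a, b⟩ := p
  have hroot := ((isCritPt_iff a b).mp hp).1
  obtain ⟨ha, hb, -⟩ := hp
  have ha₁ : 1 + a ≠ 0 := fun h => by
    rw [eq_neg_of_add_eq_zero_right h] at hroot
    norm_num at hroot
  have ha₃ : 3 - a ≠ 0 := fun h => by
    rw [← sub_eq_zero.mp h] at hroot
    norm_num at hroot
  rw [hessDet_eq ha hb]
  exact div_ne_zero (mul_ne_zero (pow_ne_zero 3 ha₁) ha₃) (by positivity)

/-- `W` has exactly 3 critical points in `(ℂ∖{0})²`, and each of them is
nondegenerate (nonvanishing Hessian determinant). -/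
theorem W_critical_points :
    {p : ℂ × ℂ | IsCritPt p}.ncard = 3 ∧
      ∀ p : ℂ × ℂ, IsCritPt p → hessDet p ≠ 0 :=
  ⟨ncard_setOf_isCritPt, fun _ => hessDet_ne_zero_of_isCritPt⟩
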